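/- arXiv:2409.01478 — 2 statements merged into one kernel-verified Lean document; each statement's English description precedes it below -/
import Mathlib

section
/- For all r > 0 and C > 0, the identity sqrt(C+r)/r = ∫₀^∞ e^{-s r} f(s;C) ds holds, where f(s;C) = (1/√(πs)) (e^{-C s} + √(π C s) · erf(√(C s))) and erf(x) = (2/√π) ∫₀^x e^{-t²} dt. -/
open Real MeasureTheory Set

/-- The Gauss error function. -/
noncomputable def erf (x : ℝ) : ℝ := (2 / Real.sqrt π) * ∫ t in (0:ℝ)..x, Real.exp (-t^2)

/-- The kernel `f(s; C)`. -/
noncomputable def fker (s C : ℝ) : ℝ :=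
  (1 / Real.sqrt (π * s)) * (Real.exp (-C * s) + Real.sqrt (π * C * s) * erf (Real.sqrt (C * s)))

/-! Expanding the kernel, `e^{-sr} f(s;C) = e^{-(C+r)s}/√(πs) + √C e^{-sr} erf(√(Cs))`. The first
term integrates to `1/√(C+r)` because `Γ(1/2) = √π`. In the second, integration by parts trades
`erf(√(Cs))` for its derivative `√(C/π) e^{-Cs}/√s`, a term of the first kind, so it contributes
`√C · √C/(r√(C+r))`. The sum is `(r + C)/(r√(C+r)) = √(C+r)/r`. -/

open Filter Topology

lemma hasDerivAt_erf (x : ℝ) : HasDerivAt erf (2 / √π * exp (-x ^ 2)) x := by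
  have cont : Continuous fun t : ℝ => exp (-t ^ 2) := by fun_prop
  exact (intervalIntegral.integral_hasDerivAt_right (cont.intervalIntegrable 0 x)
    (cont.stronglyMeasurableAtFilter _ _) cont.continuousAt).const_mul _

lemma continuous_erf : Continuous erf :=
  continuous_iff_continuousAt.2 fun x => (hasDerivAt_erf x).continuousAt

lemma erf_zero : erf 0 = 0 := by simp [erf]

lemma erf_nonneg {x : ℝ} (hx : 0 ≤ x) : 0 ≤ erf x :=
  mul_nonneg (by positivity) (intervalIntegral.integral_nonneg hx fun t _ => (exp_pos _).le)

lemma erf_le_one {x : ℝ} (hx : 0 ≤ x) : erf x ≤ 1 := by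
  have hint : IntegrableOn (fun t : ℝ => exp (-t ^ 2)) (Ioi 0) := by
    simpa using (integrable_exp_neg_mul_sq one_pos).integrableOn (s := Ioi (0:ℝ))
  have hle : ∫ t in (0:ℝ)..x, exp (-t ^ 2) ≤ ∫ t in Ioi (0:ℝ), exp (-t ^ 2) := by
    rw [intervalIntegral.integral_of_le hx]
    exact setIntegral_mono_set hint (.of_forall fun t => (exp_pos _).le)
      (.of_forall fun t ht => ht.1)
  have hhalf : ∫ t in Ioi (0:ℝ), exp (-t ^ 2) = √π / 2 := by
    simpa using integral_gaussian_Ioi 1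
  have hpi : 0 < √π := sqrt_pos.2 pi_pos
  calc erf x ≤ 2 / √π * (√π / 2) := mul_le_mul_of_nonneg_left (hhalf ▸ hle) (by positivity)
    _ = 1 := by field_simp

lemma norm_erf_le_one {x : ℝ} (hx : 0 ≤ x) : ‖erf x‖ ≤ 1 := by
  rw [norm_of_nonneg (erf_nonneg hx)]
  exact erf_le_one hx

lemma continuous_erf_sqrt_mul (C : ℝ) : Continuous fun s => erf √(C * s) :=
  continuous_erf.comp (by fun_prop)

lemma hasDerivAt_erf_sqrt_mul {C s : ℝ} (hC : 0 < C) (hs : 0 < s) :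
    HasDerivAt (fun s => erf √(C * s)) (√C / √π * ((√s)⁻¹ * exp (-C * s))) s := by
  have hCs : 0 < C * s := mul_pos hC hs
  have h := (hasDerivAt_erf √(C * s)).comp s
    ((hasDerivAt_sqrt hCs.ne').comp s ((hasDerivAt_id s).const_mul C))
  refine h.congr_deriv ?_
  rw [sq_sqrt hCs.le, sqrt_mul hC.le]
  have : 0 < √s := sqrt_pos.2 hs
  have : 0 < √C := sqrt_pos.2 hC
  have : 0 < √π := sqrt_pos.2 pi_pos
  field_simp
  rw [sq_sqrt hC.le]

lemma integral_inv_sqrt_mul_exp_neg_mul {a : ℝ} (ha : 0 < a) :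
    ∫ s in Ioi (0:ℝ), (√s)⁻¹ * exp (-a * s) = √π / √a := by
  have h := integral_rpow_mul_exp_neg_mul_Ioi one_half_pos ha
  rw [Gamma_one_half_eq, show (1 / 2 - 1 : ℝ) = -(1 / 2) by norm_num, ← sqrt_eq_rpow,
    one_div a, sqrt_inv] at h
  rw [show √π / √a = (√a)⁻¹ * √π by ring, ← h]
  refine setIntegral_congr_fun measurableSet_Ioi fun s hs => ?_
  rw [rpow_neg (le_of_lt hs), ← sqrt_eq_rpow, neg_mul]

lemma integrableOn_inv_sqrt_mul_exp_neg_mul {a : ℝ} (ha : 0 < a) :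
    IntegrableOn (fun s => (√s)⁻¹ * exp (-a * s)) (Ioi 0) := by
  refine (integrableOn_rpow_mul_exp_neg_mul_rpow (s := -(1 / 2)) (by norm_num) one_pos
    ha).congr_fun (fun s hs => ?_) measurableSet_Ioi
  dsimp only
  rw [rpow_neg (le_of_lt hs), ← sqrt_eq_rpow, rpow_one]

lemma integrableOn_exp_neg_mul_mul_of_norm_le {g : ℝ → ℝ} {r M : ℝ} (hr : 0 < r)
    (hg : AEStronglyMeasurable g (volume.restrict (Ioi 0)))
    (hbdd : ∀ s ∈ Ioi (0:ℝ), ‖g s‖ ≤ M) :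
    IntegrableOn (fun s => exp (-r * s) * g s) (Ioi 0) :=
  (exp_neg_integrableOn_Ioi 0 hr).mul_bdd hg
    ((ae_restrict_iff' measurableSet_Ioi).2 (.of_forall hbdd))

lemma integral_exp_neg_mul_mul_eq_of_hasDerivAt {g g' : ℝ → ℝ} {r M : ℝ} (hr : 0 < r)
    (hg0 : Tendsto g (𝓝[>] 0) (𝓝 0)) (hderiv : ∀ s ∈ Ioi (0:ℝ), HasDerivAt g (g' s) s)
    (hbdd : ∀ s ∈ Ioi (0:ℝ), ‖g s‖ ≤ M)
    (hint : IntegrableOn (fun s => exp (-r * s) * g' s) (Ioi 0)) :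
    ∫ s in Ioi (0:ℝ), exp (-r * s) * g s = (∫ s in Ioi (0:ℝ), exp (-r * s) * g' s) / r := by
  have hprim : ∀ s ∈ Ioi (0:ℝ), HasDerivAt (fun s => -exp (-r * s) / r) (exp (-r * s)) s := by
    intro s _
    have := (((hasDerivAt_id' s).const_mul (-r)).exp.neg).div_const r
    refine this.congr_deriv ?_
    field_simp
  have hgmeas : AEStronglyMeasurable g (volume.restrict (Ioi 0)) :=
    (ContinuousOn.aestronglyMeasurable (fun s hs => (hderiv s hs).continuousAt.continuousWithinAt)
      measurableSet_Ioi)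
  have hint' : IntegrableOn (fun s => -exp (-r * s) / r * g' s) (Ioi 0) := by
    refine IntegrableOn.congr_fun (hint.const_mul (-r⁻¹)) (fun s _ => ?_) measurableSet_Ioi
    ring
  have hzero : Tendsto (fun s => -exp (-r * s) / r * g s) (𝓝[>] 0) (𝓝 0) := by
    have hprim0 : Tendsto (fun s : ℝ => -exp (-r * s) / r) (𝓝[>] 0) (𝓝 (-exp (-r * 0) / r)) :=
      (by fun_prop : Continuous fun s : ℝ => -exp (-r * s) / r).continuousAt.tendsto.mono_left
        nhdsWithin_le_nhds
    simpa using hprim0.mul hg0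
  have hinfty : Tendsto (fun s => -exp (-r * s) / r * g s) atTop (𝓝 0) := by
    have hdecay : Tendsto (fun s : ℝ => -exp (-r * s) / r) atTop (𝓝 0) := by
      have := ((tendsto_exp_atBot.comp
        (tendsto_id.const_mul_atTop_of_neg (neg_lt_zero.2 hr))).neg).div_const r
      simpa using this
    exact hdecay.zero_mul_isBoundedUnder_le (isBoundedUnder_of_eventually_le
      (eventually_of_mem (Ioi_mem_atTop 0) hbdd))
  have h := integral_Ioi_mul_deriv_eq_deriv_mul hprim hderiv hint'
    (integrableOn_exp_neg_mul_mul_of_norm_le hr hgmeas hbdd) hzero hinfty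
  have hscale : ∫ s in Ioi (0:ℝ), -exp (-r * s) / r * g' s =
      -((∫ s in Ioi (0:ℝ), exp (-r * s) * g' s) / r) := by
    rw [div_eq_inv_mul, ← integral_const_mul, ← integral_neg]
    congr 1 with s
    ring
  rw [hscale] at h
  linarith

lemma integral_exp_neg_mul_mul_erf_sqrt_mul {r C : ℝ} (hr : 0 < r) (hC : 0 < C) :
    ∫ s in Ioi (0:ℝ), exp (-r * s) * erf √(C * s) = √C / (r * √(C + r)) := by
  have hg0 : Tendsto (fun s => erf √(C * s)) (𝓝[>] 0) (𝓝 0) := by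
    simpa [erf_zero] using ((continuous_erf_sqrt_mul C).tendsto 0).mono_left nhdsWithin_le_nhds
  have hexp : ∀ s, exp (-r * s) * (√C / √π * ((√s)⁻¹ * exp (-C * s))) =
      √C / √π * ((√s)⁻¹ * exp (-(C + r) * s)) := by
    intro s
    rw [show -(C + r) * s = -r * s + -C * s by ring, exp_add]
    ring
  have hint := (integrableOn_inv_sqrt_mul_exp_neg_mul (add_pos hC hr)).const_mul (√C / √π)
  simp_rw [← hexp] at hint
  rw [integral_exp_neg_mul_mul_eq_of_hasDerivAt hr hg0
    (fun s hs => hasDerivAt_erf_sqrt_mul hC hs) (fun s _ => norm_erf_le_one (sqrt_nonneg _)) hint]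
  simp_rw [hexp]
  rw [integral_const_mul, integral_inv_sqrt_mul_exp_neg_mul (add_pos hC hr)]
  have : 0 < √π := sqrt_pos.2 pi_pos
  field_simp

theorem stmt0 (r C : ℝ) (hr : 0 < r) (hC : 0 < C) :
    Real.sqrt (C + r) / r = ∫ s in Ioi (0:ℝ), Real.exp (-s * r) * fker s C := by
  have hCr : 0 < C + r := add_pos hC hr
  have hsplit : ∀ s ∈ Ioi (0:ℝ), exp (-s * r) * fker s C =
      1 / √π * ((√s)⁻¹ * exp (-(C + r) * s)) + √C * (exp (-r * s) * erf √(C * s)) := by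
    intro s hs
    have : 0 < √s := sqrt_pos.2 hs
    have : 0 < √π := sqrt_pos.2 pi_pos
    rw [fker, sqrt_mul pi_pos.le, sqrt_mul (by positivity), sqrt_mul pi_pos.le,
      show -(C + r) * s = -s * r + -C * s by ring, exp_add]
    field_simp
  have hint₁ := (integrableOn_inv_sqrt_mul_exp_neg_mul hCr).const_mul (1 / √π)
  have hint₂ := (integrableOn_exp_neg_mul_mul_of_norm_le hr
    (continuous_erf_sqrt_mul C).aestronglyMeasurable
    (fun s _ => norm_erf_le_one (sqrt_nonneg _))).const_mul √C
  rw [setIntegral_congr_fun measurableSet_Ioi hsplit, integral_add hint₁ hint₂,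
    integral_const_mul, integral_const_mul, integral_inv_sqrt_mul_exp_neg_mul hCr,
    integral_exp_neg_mul_mul_erf_sqrt_mul hr hC]
  have : 0 < √π := sqrt_pos.2 pi_pos
  have : 0 < √(C + r) := sqrt_pos.2 hCr
  field_simp
  rw [sq_sqrt hC.le, sq_sqrt hCr.le]
  ring
end

section
/- For every σ > 0 and every s > 0, (√2/σ) f(s; σ²/8) - 1/2 ≥ 0, where f(s;C) = (1/√(πs)) (e^{-C s} + √(π C s) erf(√(C s))). -/
open Real MeasureTheory Set

/-!
With `x = √(C s)` one has `√(π s) f(s; C) = e^{-x²} + √π x erf x`. Since `t / x ≥ 1` on `(x, ∞)`,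
the Gaussian tail satisfies `∫_x^∞ e^{-t²} dt ≤ e^{-x²} / (2x)`, i.e. `√π x (1 - erf x) ≤ e^{-x²}`.
Hence `f(s; C) ≥ √C` for all `s > 0`, and for `C = σ² / 8` the factor `√2 / σ` turns `√C` into `1/2`.
-/

open Filter Topology

lemma integrable_exp_neg_sq : Integrable fun t : ℝ => exp (-t ^ 2) := by
  simpa using integrable_exp_neg_mul_sq one_pos

lemma integrable_mul_exp_neg_sq : Integrable fun t : ℝ => t * exp (-t ^ 2) := by
  simpa using integrable_mul_exp_neg_mul_sq one_pos

lemma integral_Ioi_mul_exp_neg_sq (x : ℝ) :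
    ∫ t in Ioi x, t * exp (-t ^ 2) = exp (-x ^ 2) / 2 := by
  have hderiv (t : ℝ) : HasDerivAt (fun t => -exp (-t ^ 2) / 2) (t * exp (-t ^ 2)) t := by
    refine ((hasDerivAt_pow 2 t).fun_neg.exp.fun_neg.div_const 2).congr_deriv ?_
    push_cast
    ring
  have hlim : Tendsto (fun t : ℝ => -exp (-t ^ 2) / 2) atTop (𝓝 0) := by
    simpa using (tendsto_exp_neg_atTop_nhds_zero.comp
      (tendsto_pow_atTop two_ne_zero)).neg.div_const 2
  rw [integral_Ioi_of_hasDerivAt_of_tendsto' (fun t _ => hderiv t)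
    integrable_mul_exp_neg_sq.integrableOn hlim]
  ring

lemma integral_Ioi_exp_neg_sq_le {x : ℝ} (hx : 0 < x) :
    ∫ t in Ioi x, exp (-t ^ 2) ≤ exp (-x ^ 2) / (2 * x) := calc
  ∫ t in Ioi x, exp (-t ^ 2) ≤ ∫ t in Ioi x, x⁻¹ * (t * exp (-t ^ 2)) := by
    refine setIntegral_mono_on integrable_exp_neg_sq.integrableOn
      (integrable_mul_exp_neg_sq.const_mul _).integrableOn measurableSet_Ioi fun t ht => ?_
    rw [← mul_assoc]
    exact le_mul_of_one_le_left (exp_pos _).le ((one_le_inv_mul₀ hx).2 (le_of_lt ht))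
  _ = exp (-x ^ 2) / (2 * x) := by
    rw [integral_const_mul, integral_Ioi_mul_exp_neg_sq]
    field_simp

lemma erf_eq_one_sub_integral_Ioi {x : ℝ} (hx : 0 ≤ x) :
    erf x = 1 - 2 / √π * ∫ t in Ioi x, exp (-t ^ 2) := by
  have hsplit : (∫ t in (0)..x, exp (-t ^ 2)) + ∫ t in Ioi x, exp (-t ^ 2) = √π / 2 := by
    rw [intervalIntegral.integral_of_le hx, ← setIntegral_union (Ioc_disjoint_Ioi le_rfl)
      measurableSet_Ioi integrable_exp_neg_sq.integrableOn integrable_exp_neg_sq.integrableOn,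
      Ioc_union_Ioi_eq_Ioi hx]
    simpa using integral_gaussian_Ioi 1
  rw [erf, eq_sub_of_add_eq hsplit]
  field_simp

lemma sqrt_pi_mul_le_exp_add_mul_erf {x : ℝ} (hx : 0 ≤ x) :
    √π * x ≤ exp (-x ^ 2) + √π * x * erf x := by
  rcases hx.eq_or_lt with rfl | hx
  · simp
  have htail := integral_Ioi_exp_neg_sq_le hx
  rw [le_div_iff₀ (by positivity)] at htail
  rw [erf_eq_one_sub_integral_Ioi hx.le]
  set I := ∫ t in Ioi x, exp (-t ^ 2)
  calc √π * x = I * (2 * x) + √π * x * (1 - 2 / √π * I) := by field_simp; ring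
    _ ≤ _ := by gcongr

lemma sqrt_le_fker {s : ℝ} (hs : 0 < s) {C : ℝ} (hC : 0 ≤ C) : √C ≤ fker s C := by
  have hmain := sqrt_pi_mul_le_exp_add_mul_erf (sqrt_nonneg (C * s))
  rw [sq_sqrt (by positivity)] at hmain
  have hπCs : √(π * C * s) = √π * √(C * s) := by rw [mul_assoc, sqrt_mul pi_pos.le]
  rw [fker, hπCs, neg_mul, one_div_mul_eq_div, le_div_iff₀ (by positivity)]
  calc √C * √(π * s) = √π * √(C * s) := by rw [sqrt_mul hC, sqrt_mul pi_pos.le]; ring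
    _ ≤ _ := hmain

theorem stmt5 (σ : ℝ) (hσ : 0 < σ) (s : ℝ) (hs : 0 < s) :
    (Real.sqrt 2 / σ) * fker s (σ^2 / 8) - 1/2 ≥ 0 := by
  have hhalf : √2 / σ * √(σ ^ 2 / 8) = 1 / 2 := by
    rw [sqrt_div (sq_nonneg σ), sqrt_sq hσ.le, show (8 : ℝ) = 2 ^ 2 * 2 by norm_num,
      sqrt_mul (by positivity), sqrt_sq (by norm_num)]
    field_simp
  have hbound := mul_le_mul_of_nonneg_left (sqrt_le_fker hs (by positivity : 0 ≤ σ ^ 2 / 8))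
    (by positivity : 0 ≤ √2 / σ)
  linarith
end
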